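/- arXiv:1907.01210 — 3 statements merged into one kernel-verified Lean document; each statement's English description precedes it below -/
import Mathlib

section
/- If m ≡ 0 (mod 4) and m, n ≥ 3, then the paired domination number of the flower graph satisfies γ_p(f_{n×m}) = 2·⌈(nm - 2n)/4⌉. -/
abbrev FlowerVert (n m : ℕ) := ZMod n ⊕ ZMod n × Fin (m - 2)

def flowerRel (n m : ℕ) : FlowerVert n m → FlowerVert n m → Prop
  | Sum.inl i, Sum.inl i' => i' = i + 1
  | Sum.inl i, Sum.inr (i', j) => (i' = i ∧ j.val = 0) ∨ (i = i' + 1 ∧ j.val = m - 3)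
  | Sum.inr (i, j), Sum.inr (i', j') => i' = i ∧ j'.val = j.val + 1
  | _, _ => False

/-- The flower graph `f_{n×m}`. -/
def flowerGraph (n m : ℕ) : SimpleGraph (FlowerVert n m) :=
  SimpleGraph.fromRel (flowerRel n m)

namespace FlowerAux

variable {n m : ℕ}

lemma rel_ll {i i' : ZMod n} : flowerRel n m (Sum.inl i) (Sum.inl i') ↔ i' = i + 1 := Iff.rfl
lemma rel_lr {i i' : ZMod n} {j : Fin (m-2)} :
    flowerRel n m (Sum.inl i) (Sum.inr (i', j)) ↔
      ((i' = i ∧ j.val = 0) ∨ (i = i' + 1 ∧ j.val = m - 3)) := Iff.rfl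
lemma rel_rl {i i' : ZMod n} {j : Fin (m-2)} :
    flowerRel n m (Sum.inr (i', j)) (Sum.inl i) ↔ False := Iff.rfl
lemma rel_rr {i i' : ZMod n} {j j' : Fin (m-2)} :
    flowerRel n m (Sum.inr (i, j)) (Sum.inr (i', j')) ↔ (i' = i ∧ j'.val = j.val + 1) := Iff.rfl

lemma adj_iff {x y : FlowerVert n m} :
    (flowerGraph n m).Adj x y ↔ x ≠ y ∧ (flowerRel n m x y ∨ flowerRel n m y x) :=
  SimpleGraph.fromRel_adj _ x y

lemma adj_inl_inr {i' i : ZMod n} {j : Fin (m-2)}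
    (h : (flowerGraph n m).Adj (Sum.inl i') (Sum.inr (i, j))) :
    (i = i' ∧ j.val = 0) ∨ (i' = i + 1 ∧ j.val = m - 3) := by
  rw [adj_iff] at h
  rcases h.2 with h' | h'
  · exact h'
  · exact h'.elim

lemma adj_inr_inr {i i' : ZMod n} {j j' : Fin (m-2)}
    (h : (flowerGraph n m).Adj (Sum.inr (i', j')) (Sum.inr (i, j))) :
    i = i' ∧ (j.val = j'.val + 1 ∨ j'.val = j.val + 1) := by
  rw [adj_iff] at h
  rcases h.2 with ⟨h1, h2⟩ | ⟨h1, h2⟩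
  · exact ⟨h1, Or.inl h2⟩
  · exact ⟨h1.symm, Or.inr h2⟩

lemma adj_of_rel {x y : FlowerVert n m} (hne : x ≠ y) (h : flowerRel n m x y) :
    (flowerGraph n m).Adj x y := adj_iff.2 ⟨hne, Or.inl h⟩

lemma adj_of_rel' {x y : FlowerVert n m} (hne : x ≠ y) (h : flowerRel n m y x) :
    (flowerGraph n m).Adj x y := adj_iff.2 ⟨hne, Or.inr h⟩

-- counting lemma
lemma cnt_range (s : ℕ) :
    ((Finset.range s).filter (fun x => x % 4 = 2 ∨ x % 4 = 3)).card = s / 4 + (s + 1) / 4 := by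
  induction s with
  | zero => simp
  | succ k ih =>
    rw [Finset.range_add_one, Finset.filter_insert]
    by_cases hk : k % 4 = 2 ∨ k % 4 = 3
    · rw [if_pos hk, Finset.card_insert_of_notMem (by simp), ih]
      omega
    · rw [if_neg hk, ih]
      omega

lemma ceil_nat_div4 (a : ℕ) : ⌈(a : ℚ) / 4⌉ = ((a + 3) / 4 : ℕ) := by
  rw [Int.ceil_eq_iff]
  have h1 : a ≤ 4 * ((a + 3) / 4) := by omega
  have h2 : 4 * ((a + 3) / 4) < a + 4 := by omega
  have hb1 : (((a + 3) / 4 : ℕ) : ℚ) * 4 < (a : ℚ) + 4 := by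
    calc (((a + 3) / 4 : ℕ) : ℚ) * 4 = ((4 * ((a + 3) / 4) : ℕ) : ℚ) := by push_cast; ring
    _ < ((a + 4 : ℕ) : ℚ) := by exact_mod_cast h2
    _ = (a : ℚ) + 4 := by push_cast; ring
  have hb2 : (a : ℚ) ≤ (((a + 3) / 4 : ℕ) : ℚ) * 4 := by
    calc (a : ℚ) ≤ ((4 * ((a + 3) / 4) : ℕ) : ℚ) := by exact_mod_cast h1
    _ = (((a + 3) / 4 : ℕ) : ℚ) * 4 := by push_cast; ring
  have hcast : ((((a + 3) / 4 : ℕ) : ℤ) : ℚ) = (((a + 3) / 4 : ℕ) : ℚ) := by push_cast; rfl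
  constructor
  · rw [hcast]
    linarith
  · rw [hcast, div_le_iff₀ (by norm_num : (0:ℚ) < 4)]
    linarith


lemma card4 {α : Type*} [DecidableEq α] (a b c d : α) : ({a, b, c, d} : Finset α).card ≤ 4 := by
  apply (Finset.card_insert_le _ _).trans
  apply Nat.succ_le_succ
  apply (Finset.card_insert_le _ _).trans
  apply Nat.succ_le_succ
  apply (Finset.card_insert_le _ _).trans
  apply Nat.succ_le_succ
  simp

def mkj (m : ℕ) (hm : 4 ≤ m) (x : ℕ) : Fin (m - 2) := ⟨min x (m - 3), by omega⟩

lemma mkj_eq (hm : 4 ≤ m) (j : Fin (m - 2)) {x : ℕ} (h : j.val = x) : j = mkj m hm x := by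
  have := j.isLt
  apply Fin.ext
  simp only [mkj]
  omega

lemma cover_inl (hm : 4 ≤ m) {p i : ZMod n} {j : Fin (m - 2)}
    (h : Sum.inl p = (Sum.inr (i, j) : FlowerVert n m) ∨
      (flowerGraph n m).Adj (Sum.inl p) (Sum.inr (i, j))) :
    (i = p ∧ j = mkj m hm 0) ∨ (i = p - 1 ∧ j = mkj m hm (m - 3)) := by
  rcases h with h | h
  · exact absurd h (by simp)
  · rcases adj_inl_inr h with ⟨h1, h2⟩ | ⟨h1, h2⟩
    · exact Or.inl ⟨h1, mkj_eq hm j h2⟩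
    · exact Or.inr ⟨eq_sub_iff_add_eq.2 h1.symm, mkj_eq hm j h2⟩

lemma cover_inr (hm : 4 ≤ m) {p i : ZMod n} {x j : Fin (m - 2)}
    (h : (Sum.inr (p, x) : FlowerVert n m) = Sum.inr (i, j) ∨
      (flowerGraph n m).Adj (Sum.inr (p, x)) (Sum.inr (i, j))) :
    i = p ∧ (j.val = x.val ∨ j.val = x.val + 1 ∨ (1 ≤ x.val ∧ j.val + 1 = x.val)) := by
  rcases h with h | h
  · obtain ⟨h1, h2⟩ := Prod.mk.injEq .. ▸ (Sum.inr.injEq _ _ ▸ h)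
    exact ⟨h1.symm, Or.inl (by rw [h2])⟩
  · rcases adj_inr_inr h with ⟨h1, h2 | h2⟩
    · exact ⟨h1, Or.inr (Or.inl h2)⟩
    · exact ⟨h1, Or.inr (Or.inr ⟨by omega, h2.symm⟩)⟩

/-- cover lemma for an edge of the shape (hub, inner). -/
lemma cover4_lr (hn : 3 ≤ n) (hm : 4 ≤ m) {p q : ZMod n} {jq : Fin (m - 2)}
    (hab : (flowerGraph n m).Adj (Sum.inl p) (Sum.inr (q, jq))) :
    ∃ S : Finset (FlowerVert n m), S.card ≤ 4 ∧ ∀ (i : ZMod n) (j : Fin (m - 2)),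
      ((Sum.inl p = (Sum.inr (i, j) : FlowerVert n m) ∨
          (flowerGraph n m).Adj (Sum.inl p) (Sum.inr (i, j))) ∨
        ((Sum.inr (q, jq) : FlowerVert n m) = Sum.inr (i, j) ∨
          (flowerGraph n m).Adj (Sum.inr (q, jq)) (Sum.inr (i, j)))) →
      Sum.inr (i, j) ∈ S := by
  classical
  rcases adj_inl_inr hab with ⟨hq, h0⟩ | ⟨hp, hlast⟩
  · refine ⟨{Sum.inr (p, mkj m hm 0), Sum.inr (p - 1, mkj m hm (m - 3)),
      Sum.inr (q, mkj m hm 0), Sum.inr (q, mkj m hm 1)}, card4 _ _ _ _, ?_⟩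
    intro i j h
    rcases h with h | h
    · rcases cover_inl hm h with ⟨rfl, rfl⟩ | ⟨rfl, rfl⟩ <;> simp
    · obtain ⟨rfl, hj⟩ := cover_inr hm h
      rcases hj with hj | hj | ⟨h1, hj⟩
      · rw [mkj_eq hm j (by omega : j.val = 0)]; simp
      · rw [mkj_eq hm j (by omega : j.val = 1)]; simp
      · omega
  · refine ⟨{Sum.inr (p, mkj m hm 0), Sum.inr (p - 1, mkj m hm (m - 3)),
      Sum.inr (q, mkj m hm (m - 3)), Sum.inr (q, mkj m hm (m - 4))}, card4 _ _ _ _, ?_⟩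
    intro i j h
    rcases h with h | h
    · rcases cover_inl hm h with ⟨rfl, rfl⟩ | ⟨rfl, rfl⟩ <;> simp
    · obtain ⟨rfl, hj⟩ := cover_inr hm h
      have := j.isLt
      rcases hj with hj | hj | ⟨h1, hj⟩
      · rw [mkj_eq hm j (by omega : j.val = m - 3)]; simp
      · omega
      · rw [mkj_eq hm j (by omega : j.val = m - 4)]; simp

/-- cover lemma for an edge of the shape (inner, inner). -/
lemma cover4_rr (hn : 3 ≤ n) (hm : 4 ≤ m) {p : ZMod n} {ja jb : Fin (m - 2)}
    (hseq : jb.val = ja.val + 1) :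
    ∃ S : Finset (FlowerVert n m), S.card ≤ 4 ∧ ∀ (i : ZMod n) (j : Fin (m - 2)),
      (((Sum.inr (p, ja) : FlowerVert n m) = Sum.inr (i, j) ∨
          (flowerGraph n m).Adj (Sum.inr (p, ja)) (Sum.inr (i, j))) ∨
        ((Sum.inr (p, jb) : FlowerVert n m) = Sum.inr (i, j) ∨
          (flowerGraph n m).Adj (Sum.inr (p, jb)) (Sum.inr (i, j)))) →
      Sum.inr (i, j) ∈ S := by
  classical
  refine ⟨{Sum.inr (p, mkj m hm (ja.val - 1)), Sum.inr (p, mkj m hm ja.val),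
    Sum.inr (p, mkj m hm (ja.val + 1)), Sum.inr (p, mkj m hm (ja.val + 2))},
    card4 _ _ _ _, ?_⟩
  intro i j h
  rcases h with h | h
  · obtain ⟨rfl, hj⟩ := cover_inr hm h
    rcases hj with hj | hj | ⟨h1, hj⟩
    · rw [mkj_eq hm j hj]; simp
    · rw [mkj_eq hm j hj]; simp
    · rw [mkj_eq hm j (by omega : j.val = ja.val - 1)]; simp
  · obtain ⟨rfl, hj⟩ := cover_inr hm h
    rcases hj with hj | hj | ⟨h1, hj⟩
    · rw [mkj_eq hm j (by omega : j.val = ja.val + 1)]; simp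
    · rw [mkj_eq hm j (by omega : j.val = ja.val + 2)]; simp
    · rw [mkj_eq hm j (by omega : j.val = ja.val)]; simp

lemma cover4 (hn : 3 ≤ n) (hm : 4 ≤ m) {a b : FlowerVert n m}
    (hab : (flowerGraph n m).Adj a b) :
    ∃ S : Finset (FlowerVert n m), S.card ≤ 4 ∧ ∀ (i : ZMod n) (j : Fin (m - 2)),
      ((a = Sum.inr (i, j) ∨ (flowerGraph n m).Adj a (Sum.inr (i, j))) ∨
        (b = Sum.inr (i, j) ∨ (flowerGraph n m).Adj b (Sum.inr (i, j)))) →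
      Sum.inr (i, j) ∈ S := by
  classical
  match a, b with
  | Sum.inl p, Sum.inl q =>
    refine ⟨{Sum.inr (p, mkj m hm 0), Sum.inr (p - 1, mkj m hm (m - 3)),
      Sum.inr (q, mkj m hm 0), Sum.inr (q - 1, mkj m hm (m - 3))}, card4 _ _ _ _, ?_⟩
    intro i j h
    rcases h with h | h
    · rcases cover_inl hm h with ⟨rfl, rfl⟩ | ⟨rfl, rfl⟩ <;> simp
    · rcases cover_inl hm h with ⟨rfl, rfl⟩ | ⟨rfl, rfl⟩ <;> simp
  | Sum.inl p, Sum.inr (q, jq) => exact cover4_lr hn hm hab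
  | Sum.inr (q, jq), Sum.inl p =>
    obtain ⟨S, hS, hmem⟩ := cover4_lr hn hm hab.symm
    exact ⟨S, hS, fun i j h => hmem i j h.symm⟩
  | Sum.inr (p, ja), Sum.inr (q, jb) =>
    obtain ⟨rfl, hj | hj⟩ := adj_inr_inr hab
    · exact cover4_rr hn hm hj
    · obtain ⟨S, hS, hmem⟩ := cover4_rr hn hm hj
      exact ⟨S, hS, fun i j h => hmem i j h.symm⟩


end FlowerAux

/-- `D` is a paired dominating set of `G`. -/
def IsPairedDominating {V : Type*} (G : SimpleGraph V) (D : Set V) : Prop :=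
  (∀ v ∉ D, ∃ u ∈ D, G.Adj u v) ∧
  ∃ M : G.Subgraph, M.verts = D ∧ M.IsMatching

/-- `D` is a `k`-distance paired dominating set of `G`. -/
def IsKDistPairedDominating {V : Type*} (G : SimpleGraph V) (k : ℕ) (D : Set V) : Prop :=
  (∀ v ∉ D, ∃ u ∈ D, G.edist u v ≤ k) ∧
  ∃ M : G.Subgraph, M.verts = D ∧ M.IsMatching

/-- The paired domination number `γ_p(G)`. -/
noncomputable def pairedDomNum {V : Type*} (G : SimpleGraph V) : ℕ :=
  sInf {c | ∃ D : Set V, IsPairedDominating G D ∧ D.ncard = c}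

/-- The `k`-distance paired domination number `γ_p^k(G)`. -/
noncomputable def kDistPairedDomNum {V : Type*} (G : SimpleGraph V) (k : ℕ) : ℕ :=
  sInf {c | ∃ D : Set V, IsKDistPairedDominating G k D ∧ D.ncard = c}

/-- The `k`-distance domination number `γ^k(G)`. -/
noncomputable def kDistDomNum {V : Type*} (G : SimpleGraph V) (k : ℕ) : ℕ :=
  sInf {c | ∃ D : Set V, (∀ v ∉ D, ∃ u ∈ D, G.edist u v ≤ k) ∧ D.ncard = c}

namespace FlowerAux
variable {n m : ℕ}

lemma lower (hn : 3 ≤ n) (hm : 4 ≤ m) {D : Set (FlowerVert n m)}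
    (hD : IsPairedDominating (flowerGraph n m) D) :
    n * (m - 2) ≤ 2 * D.ncard ∧ Even D.ncard := by
  classical
  haveI : NeZero n := ⟨by omega⟩
  obtain ⟨hdom, M, hMv, hM⟩ := hD
  subst hMv
  haveI : Fintype (M.verts) := (Set.toFinite _).fintype
  have hM' : ∀ ⦃v⦄, v ∈ M.verts → ∃! w, M.Adj v w := hM
  -- partner function
  let f : FlowerVert n m → FlowerVert n m := fun v => if h : v ∈ M.verts then (hM' h).choose else v
  have hf1 : ∀ v, v ∈ M.verts → M.Adj v (f v) := fun v hv => by
    simp only [f, dif_pos hv]; exact (hM' hv).choose_spec.1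
  have hfv : ∀ v, v ∈ M.verts → f v ∈ M.verts := fun v hv => M.edge_vert (hf1 v hv).symm
  have hfu : ∀ v, v ∈ M.verts → ∀ w, M.Adj v w → w = f v := fun v hv w hw => by
    simp only [f, dif_pos hv]; exact (hM' hv).choose_spec.2 w hw
  have hff : ∀ v, v ∈ M.verts → f (f v) = v := fun v hv =>
    (hfu (f v) (hfv v hv) v (hf1 v hv).symm).symm
  have hfne : ∀ v, v ∈ M.verts → f v ≠ v := fun v hv => (M.adj_sub (hf1 v hv)).ne'
  -- dominator function
  let d : FlowerVert n m → FlowerVert n m := fun w => if h : w ∈ M.verts then w else (hdom w h).choose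
  have hd1 : ∀ w, d w ∈ M.verts := by
    intro w
    by_cases h : w ∈ M.verts
    · simpa only [d, dif_pos h] using h
    · simp only [d, dif_neg h]; exact (hdom w h).choose_spec.1
  have hd2 : ∀ w, d w = w ∨ (flowerGraph n m).Adj (d w) w := by
    intro w
    by_cases h : w ∈ M.verts
    · simp only [d, dif_pos h]
      exact Or.inl trivial
    · simp only [d, dif_neg h]; exact Or.inr (hdom w h).choose_spec.2
  -- finsets
  let I : Finset (FlowerVert n m) :=
    Finset.univ.filter (fun x => ∃ p : ZMod n × Fin (m - 2), x = Sum.inr p)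
  have hIcard : I.card = n * (m - 2) := by
    have hI : I = Finset.univ.image Sum.inr := by
      ext x
      cases x with
      | inl i => simp [I]
      | inr p =>
        simp [I]
        exact ⟨p.1, p.2, rfl⟩
    rw [hI, Finset.card_image_of_injective _ Sum.inr_injective, Finset.card_univ]
    simp [ZMod.card]
  let c : FlowerVert n m → Sym2 (FlowerVert n m) := fun w => s(d w, f (d w))
  let DT : Finset (FlowerVert n m) := M.verts.toFinset
  let g : FlowerVert n m → Sym2 (FlowerVert n m) := fun a => s(a, f a)
  have key1 : I.card ≤ 4 * (I.image c).card := by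
    rw [Finset.card_eq_sum_card_image c I]
    have fiber : ∀ b ∈ I.image c, (I.filter fun x => c x = b).card ≤ 4 := by
      intro b hb
      obtain ⟨w0, _, rfl⟩ := Finset.mem_image.1 hb
      have ha : d w0 ∈ M.verts := hd1 w0
      have hadj : (flowerGraph n m).Adj (d w0) (f (d w0)) := M.adj_sub (hf1 _ ha)
      obtain ⟨S, hS4, hSmem⟩ := cover4 hn hm hadj
      refine le_trans (Finset.card_le_card ?_) hS4
      intro x hx
      obtain ⟨hxI, hcx⟩ := Finset.mem_filter.1 hx
      obtain ⟨⟨i, j⟩, rfl⟩ := (Finset.mem_filter.1 hxI).2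
      have hdx : d (Sum.inr (i, j)) = d w0 ∨ d (Sum.inr (i, j)) = f (d w0) := by
        rcases Sym2.eq_iff.1 hcx with ⟨h1, _⟩ | ⟨h1, _⟩
        · exact Or.inl h1
        · exact Or.inr h1
      apply hSmem i j
      rcases hdx with h1 | h1
      · left
        rcases hd2 (Sum.inr (i, j)) with h2 | h2 <;> rw [h1] at h2
        · exact Or.inl h2
        · exact Or.inr h2
      · right
        rcases hd2 (Sum.inr (i, j)) with h2 | h2 <;> rw [h1] at h2
        · exact Or.inl h2
        · exact Or.inr h2
    calc ∑ b ∈ I.image c, (I.filter fun x => c x = b).card ≤ ∑ _b ∈ I.image c, 4 :=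
          Finset.sum_le_sum fiber
      _ = 4 * (I.image c).card := by rw [Finset.sum_const, smul_eq_mul, mul_comm]
  have himg : I.image c ⊆ DT.image g := by
    intro b hb
    obtain ⟨w, _, rfl⟩ := Finset.mem_image.1 hb
    exact Finset.mem_image_of_mem g (Set.mem_toFinset.2 (hd1 w))
  have key2 : 2 * (DT.image g).card ≤ DT.card := by
    rw [Finset.card_eq_sum_card_image g DT]
    have fiber : ∀ b ∈ DT.image g, 2 ≤ (DT.filter fun a => g a = b).card := by
      intro b hb
      obtain ⟨a, ha, rfl⟩ := Finset.mem_image.1 hb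
      have haM : a ∈ M.verts := Set.mem_toFinset.1 ha
      have hsub : ({a, f a} : Finset (FlowerVert n m)) ⊆ DT.filter (fun x => g x = g a) := by
        intro x hx
        rcases Finset.mem_insert.1 hx with rfl | hx
        · exact Finset.mem_filter.2 ⟨ha, rfl⟩
        · rw [Finset.mem_singleton] at hx
          subst hx
          refine Finset.mem_filter.2 ⟨Set.mem_toFinset.2 (hfv a haM), ?_⟩
          show s(f a, f (f a)) = s(a, f a)
          rw [hff a haM]
          exact Sym2.eq_swap
      have h2 : ({a, f a} : Finset (FlowerVert n m)).card = 2 := by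
        rw [Finset.card_insert_of_notMem (by
          simp only [Finset.mem_singleton]
          exact fun h => hfne a haM h.symm)]
        simp
      calc 2 = ({a, f a} : Finset (FlowerVert n m)).card := h2.symm
        _ ≤ _ := Finset.card_le_card hsub
    calc 2 * (DT.image g).card = ∑ _b ∈ DT.image g, 2 := by
          rw [Finset.sum_const, smul_eq_mul, mul_comm]
      _ ≤ ∑ b ∈ DT.image g, (DT.filter fun a => g a = b).card := Finset.sum_le_sum fiber
  have hcc : (I.image c).card ≤ (DT.image g).card := Finset.card_le_card himg
  have hncard : M.verts.ncard = DT.card := Set.ncard_eq_toFinset_card' _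
  constructor
  · rw [hncard]; omega
  · rw [hncard]; exact hM.even_card

end FlowerAux

namespace FlowerAux
variable {n m : ℕ}

/-- The dominating set: all hubs, inner vertices at positions ≡ 2,3 mod 4, plus
(for odd `n`) the extra vertex `v_{0,1}`. -/
def PD (n m : ℕ) : FlowerVert n m → Prop
  | Sum.inl _ => True
  | Sum.inr p => p.2.val % 4 = 2 ∨ p.2.val % 4 = 3 ∨ (n % 2 = 1 ∧ p.1 = 0 ∧ p.2.val = 0)

/-- The pairing function for the matching on `PD`. -/
def pairF (n m : ℕ) (hm : 4 ≤ m) (h4 : m % 4 = 0) : FlowerVert n m → FlowerVert n m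
  | Sum.inl i =>
      if n % 2 = 1 ∧ i = 0 then Sum.inr (0, ⟨0, by omega⟩)
      else if i.val % 2 = n % 2 then Sum.inl ((i.val + 1 : ℕ) : ZMod n)
      else Sum.inl ((i.val - 1 : ℕ) : ZMod n)
  | Sum.inr p =>
      if n % 2 = 1 ∧ p.1 = 0 ∧ p.2.val = 0 then Sum.inl 0
      else if h2 : p.2.val % 4 = 2 then Sum.inr (p.1, ⟨p.2.val + 1, by have := p.2.isLt; omega⟩)
      else if _h3 : p.2.val % 4 = 3 then
        Sum.inr (p.1, ⟨p.2.val - 1, by have := p.2.isLt; omega⟩)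
      else Sum.inr p

lemma PD_inl (i : ZMod n) : PD n m (Sum.inl i) := trivial

lemma PD_inr {i : ZMod n} {j : Fin (m - 2)} :
    PD n m (Sum.inr (i, j)) ↔
      (j.val % 4 = 2 ∨ j.val % 4 = 3 ∨ (n % 2 = 1 ∧ i = 0 ∧ j.val = 0)) := Iff.rfl

section Steps
variable (hn : 3 ≤ n) (hm : 4 ≤ m) (h4 : m % 4 = 0)

lemma pairF_inl_spec {i : ZMod n} (h1 : n % 2 = 1 ∧ i = 0) :
    pairF n m hm h4 (Sum.inl i) = Sum.inr (0, ⟨0, by omega⟩) := by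
  simp only [pairF]
  rw [if_pos h1]

lemma pairF_inl_up {i : ZMod n} (h1 : ¬(n % 2 = 1 ∧ i = 0)) (hA : i.val % 2 = n % 2) :
    pairF n m hm h4 (Sum.inl i) = Sum.inl ((i.val + 1 : ℕ) : ZMod n) := by
  simp only [pairF]
  rw [if_neg h1, if_pos hA]

lemma pairF_inl_down {i : ZMod n} (h1 : ¬(n % 2 = 1 ∧ i = 0)) (hA : ¬ i.val % 2 = n % 2) :
    pairF n m hm h4 (Sum.inl i) = Sum.inl ((i.val - 1 : ℕ) : ZMod n) := by
  simp only [pairF]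
  rw [if_neg h1, if_neg hA]

lemma pairF_inr_spec {i : ZMod n} {j : Fin (m - 2)}
    (h1 : n % 2 = 1 ∧ i = 0 ∧ j.val = 0) :
    pairF n m hm h4 (Sum.inr (i, j)) = Sum.inl 0 := by
  simp only [pairF]
  rw [if_pos (show n % 2 = 1 ∧ (i, j).1 = 0 ∧ (i, j).2.val = 0 from h1)]

lemma pairF_inr_up {i : ZMod n} {j : Fin (m - 2)} (h2 : j.val % 4 = 2) :
    pairF n m hm h4 (Sum.inr (i, j)) =
      Sum.inr (i, ⟨j.val + 1, by have := j.isLt; omega⟩) := by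
  simp only [pairF]
  rw [if_neg (show ¬(n % 2 = 1 ∧ (i, j).1 = 0 ∧ (i, j).2.val = 0) by
        rintro ⟨-, -, hz⟩
        have hz' : j.val = 0 := hz
        omega),
    dif_pos (show (i, j).2.val % 4 = 2 from h2)]

lemma pairF_inr_down {i : ZMod n} {j : Fin (m - 2)} (h3 : j.val % 4 = 3) :
    pairF n m hm h4 (Sum.inr (i, j)) =
      Sum.inr (i, ⟨j.val - 1, by have := j.isLt; omega⟩) := by
  simp only [pairF]
  rw [if_neg (show ¬(n % 2 = 1 ∧ (i, j).1 = 0 ∧ (i, j).2.val = 0) by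
        rintro ⟨-, -, hz⟩
        have hz' : j.val = 0 := hz
        omega),
    dif_neg (show ¬ (i, j).2.val % 4 = 2 by show ¬ j.val % 4 = 2; omega),
    dif_pos (show (i, j).2.val % 4 = 3 from h3)]

end Steps

lemma pairF_mem (hn : 3 ≤ n) (hm : 4 ≤ m) (h4 : m % 4 = 0) {x : FlowerVert n m}
    (hx : PD n m x) : PD n m (pairF n m hm h4 x) := by
  haveI : NeZero n := ⟨by omega⟩
  rcases x with i | ⟨i, j⟩
  · by_cases h1 : n % 2 = 1 ∧ i = 0
    · rw [pairF_inl_spec hm h4 h1]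
      exact PD_inr.2 (Or.inr (Or.inr ⟨h1.1, rfl, rfl⟩))
    · by_cases hA : i.val % 2 = n % 2
      · rw [pairF_inl_up hm h4 h1 hA]; exact trivial
      · rw [pairF_inl_down hm h4 h1 hA]; exact trivial
  · have hjlt := j.isLt
    rcases PD_inr.1 hx with h2 | h3 | hsp
    · rw [pairF_inr_up hm h4 h2]
      exact PD_inr.2 (Or.inr (Or.inl (by show (j.val + 1) % 4 = 3; omega)))
    · rw [pairF_inr_down hm h4 h3]
      exact PD_inr.2 (Or.inl (by show (j.val - 1) % 4 = 2; omega))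
    · rw [pairF_inr_spec hm h4 hsp]
      exact trivial

lemma pairF_invol (hn : 3 ≤ n) (hm : 4 ≤ m) (h4 : m % 4 = 0) {x : FlowerVert n m}
    (hx : PD n m x) : pairF n m hm h4 (pairF n m hm h4 x) = x := by
  haveI : NeZero n := ⟨by omega⟩
  have hvalcast : ∀ i : ZMod n, ((i.val : ℕ) : ZMod n) = i := ZMod.natCast_rightInverse
  rcases x with i | ⟨i, j⟩
  · have hvlt : i.val < n := ZMod.val_lt i
    by_cases h1 : n % 2 = 1 ∧ i = 0
    · rw [pairF_inl_spec hm h4 h1, pairF_inr_spec hm h4 ⟨h1.1, rfl, rfl⟩, h1.2]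
    · by_cases hA : i.val % 2 = n % 2
      · have hup : i.val + 1 < n := by omega
        have hcval : ((i.val + 1 : ℕ) : ZMod n).val = i.val + 1 := ZMod.val_cast_of_lt hup
        rw [pairF_inl_up hm h4 h1 hA,
          pairF_inl_down hm h4
            (by rintro ⟨-, hz⟩; rw [← ZMod.val_eq_zero, hcval] at hz; omega)
            (by rw [hcval]; omega),
          hcval]
        rw [show i.val + 1 - 1 = i.val from rfl, hvalcast]
      · have hdown : 1 ≤ i.val := by
          rcases Nat.eq_zero_or_pos i.val with h0 | h0
          · exfalso
            have hi0 : i = 0 := (ZMod.val_eq_zero i).1 h0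
            have : ¬ (n % 2 = 1) := fun hodd => h1 ⟨hodd, hi0⟩
            omega
          · exact h0
        have hlt' : i.val - 1 < n := by omega
        have hcval : ((i.val - 1 : ℕ) : ZMod n).val = i.val - 1 := ZMod.val_cast_of_lt hlt'
        rw [pairF_inl_down hm h4 h1 hA,
          pairF_inl_up hm h4
            (by rintro ⟨hodd, hz⟩; rw [← ZMod.val_eq_zero, hcval] at hz; omega)
            (by rw [hcval]; omega),
          hcval, show i.val - 1 + 1 = i.val from by omega, hvalcast]
  · have hjlt := j.isLt
    rcases PD_inr.1 hx with h2 | h3 | hsp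
    · rw [pairF_inr_up hm h4 h2,
        pairF_inr_down hm h4 (show (j.val + 1) % 4 = 3 by omega)]
      simp only [Sum.inr.injEq, Prod.mk.injEq]
      exact ⟨trivial, Fin.ext (show j.val + 1 - 1 = j.val by omega)⟩
    · rw [pairF_inr_down hm h4 h3,
        pairF_inr_up hm h4 (show (j.val - 1) % 4 = 2 by omega)]
      simp only [Sum.inr.injEq, Prod.mk.injEq]
      exact ⟨trivial, Fin.ext (show j.val - 1 + 1 = j.val by omega)⟩
    · obtain ⟨hodd, hi0, hj0⟩ := hsp
      rw [pairF_inr_spec hm h4 ⟨hodd, hi0, hj0⟩, pairF_inl_spec hm h4 ⟨hodd, rfl⟩, hi0]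
      simp only [Sum.inr.injEq, Prod.mk.injEq]
      exact ⟨trivial, Fin.ext (show (0 : ℕ) = j.val by omega)⟩

lemma pairF_adj (hn : 3 ≤ n) (hm : 4 ≤ m) (h4 : m % 4 = 0) {x : FlowerVert n m}
    (hx : PD n m x) : (flowerGraph n m).Adj x (pairF n m hm h4 x) := by
  haveI : NeZero n := ⟨by omega⟩
  have hvalcast : ∀ i : ZMod n, ((i.val : ℕ) : ZMod n) = i := ZMod.natCast_rightInverse
  rcases x with i | ⟨i, j⟩
  · have hvlt : i.val < n := ZMod.val_lt i
    by_cases h1 : n % 2 = 1 ∧ i = 0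
    · rw [pairF_inl_spec hm h4 h1, h1.2]
      exact adj_of_rel (by simp) (Or.inl ⟨rfl, rfl⟩)
    · by_cases hA : i.val % 2 = n % 2
      · have hup : i.val + 1 < n := by omega
        have hcval : ((i.val + 1 : ℕ) : ZMod n).val = i.val + 1 := ZMod.val_cast_of_lt hup
        rw [pairF_inl_up hm h4 h1 hA]
        apply adj_of_rel
        · intro heq
          have h5 := congrArg (fun y => Sum.elim ZMod.val (fun _ => 0) y) heq
          simp only [Sum.elim_inl, hcval] at h5
          omega
        · show _ = i + 1
          rw [Nat.cast_add, Nat.cast_one, hvalcast]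
      · have hdown : 1 ≤ i.val := by
          rcases Nat.eq_zero_or_pos i.val with h0 | h0
          · exfalso
            have hi0 : i = 0 := (ZMod.val_eq_zero i).1 h0
            have : ¬ (n % 2 = 1) := fun hodd => h1 ⟨hodd, hi0⟩
            omega
          · exact h0
        have hlt' : i.val - 1 < n := by omega
        have hcval : ((i.val - 1 : ℕ) : ZMod n).val = i.val - 1 := ZMod.val_cast_of_lt hlt'
        rw [pairF_inl_down hm h4 h1 hA]
        apply adj_of_rel'
        · intro heq
          have h5 := congrArg (fun y => Sum.elim ZMod.val (fun _ => 0) y) heq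
          simp only [Sum.elim_inl, hcval] at h5
          omega
        · show i = _ + 1
          have h6 : ((i.val - 1 + 1 : ℕ) : ZMod n) = ((i.val - 1 : ℕ) : ZMod n) + 1 := by
            rw [Nat.cast_add, Nat.cast_one]
          rw [← h6, show i.val - 1 + 1 = i.val from by omega, hvalcast]
  · have hjlt := j.isLt
    rcases PD_inr.1 hx with h2 | h3 | hsp
    · rw [pairF_inr_up hm h4 h2]
      apply adj_of_rel
      · intro heq
        have h5 : j = ⟨j.val + 1, by omega⟩ :=
          congrArg (fun y => Sum.elim (fun _ => j) Prod.snd y) heq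
        have h6 : j.val = j.val + 1 := congrArg Fin.val h5
        omega
      · exact ⟨rfl, rfl⟩
    · rw [pairF_inr_down hm h4 h3]
      apply adj_of_rel'
      · intro heq
        have h5 : j = ⟨j.val - 1, by omega⟩ :=
          congrArg (fun y => Sum.elim (fun _ => j) Prod.snd y) heq
        have h6 : j.val = j.val - 1 := congrArg Fin.val h5
        omega
      · exact ⟨rfl, show j.val = j.val - 1 + 1 by omega⟩
    · obtain ⟨hodd, hi0, hj0⟩ := hsp
      rw [pairF_inr_spec hm h4 ⟨hodd, hi0, hj0⟩]
      apply adj_of_rel' (by simp)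
      exact Or.inl ⟨hi0, hj0⟩

lemma PD_dominating (hn : 3 ≤ n) (hm : 4 ≤ m) (h4 : m % 4 = 0) :
    ∀ v, ¬ PD n m v → ∃ u, PD n m u ∧ (flowerGraph n m).Adj u v := by
  intro v hv
  rcases v with i | ⟨i, j⟩
  · exact absurd trivial hv
  · have hv' : ¬ (j.val % 4 = 2 ∨ j.val % 4 = 3 ∨ (n % 2 = 1 ∧ i = 0 ∧ j.val = 0)) := hv
    push_neg at hv'
    obtain ⟨hva, hvb, -⟩ := hv'
    have hjlt := j.isLt
    by_cases hj0 : j.val = 0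
    · exact ⟨Sum.inl i, trivial, adj_of_rel (by simp) (Or.inl ⟨rfl, hj0⟩)⟩
    · by_cases hjl : j.val = m - 3
      · exact ⟨Sum.inl (i + 1), trivial, adj_of_rel (by simp) (Or.inr ⟨rfl, hjl⟩)⟩
      · have h01 : j.val % 4 = 0 ∨ j.val % 4 = 1 := by omega
        rcases h01 with h0 | h1
        · refine ⟨Sum.inr (i, ⟨j.val - 1, by omega⟩),
            PD_inr.2 (Or.inr (Or.inl (show (j.val - 1) % 4 = 3 by omega))), ?_⟩
          apply adj_of_rel
          · intro heq
            have h5 : (⟨j.val - 1, by omega⟩ : Fin (m - 2)) = j :=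
              congrArg (fun y => Sum.elim (fun _ => j) Prod.snd y) heq
            have h6 : j.val - 1 = j.val := congrArg Fin.val h5
            omega
          · exact ⟨rfl, show j.val = j.val - 1 + 1 by omega⟩
        · refine ⟨Sum.inr (i, ⟨j.val + 1, by omega⟩),
            PD_inr.2 (Or.inl (show (j.val + 1) % 4 = 2 by omega)), ?_⟩
          apply adj_of_rel'
          · intro heq
            have h5 : (⟨j.val + 1, by omega⟩ : Fin (m - 2)) = j :=
              congrArg (fun y => Sum.elim (fun _ => j) Prod.snd y) heq
            have h6 : j.val + 1 = j.val := congrArg Fin.val h5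
            omega
          · exact ⟨rfl, rfl⟩

lemma PD_ncard (hn : 3 ≤ n) (hm : 4 ≤ m) (h4 : m % 4 = 0) :
    {x : FlowerVert n m | PD n m x}.ncard = n + n * ((m - 4) / 2) + n % 2 := by
  classical
  haveI : NeZero n := ⟨by omega⟩
  rw [Set.ncard_eq_toFinset_card', Set.toFinset_setOf]
  have hsplit : (Finset.univ : Finset (FlowerVert n m)) =
      (Finset.univ.image Sum.inl) ∪ (Finset.univ.image Sum.inr) := by
    ext x
    rcases x with i | p <;> simp
  rw [hsplit, Finset.filter_union, Finset.card_union_of_disjoint (by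
      refine Finset.disjoint_filter_filter ?_
      rw [Finset.disjoint_left]
      rintro x hx1 hx2
      obtain ⟨i, -, rfl⟩ := Finset.mem_image.1 hx1
      obtain ⟨p, -, h⟩ := Finset.mem_image.1 hx2
      cases h)]
  have hcard1 : ((Finset.univ.image (Sum.inl : ZMod n → FlowerVert n m)).filter
      (fun x => PD n m x)).card = n := by
    rw [Finset.filter_true_of_mem (fun x hx => by
      obtain ⟨i, -, rfl⟩ := Finset.mem_image.1 hx
      exact trivial)]
    rw [Finset.card_image_of_injective _ Sum.inl_injective, Finset.card_univ, ZMod.card]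
  have hcard2 : ((Finset.univ.image (Sum.inr : ZMod n × Fin (m - 2) → FlowerVert n m)).filter
      (fun x => PD n m x)).card = n * ((m - 4) / 2) + n % 2 := by
    rw [Finset.filter_image, Finset.card_image_of_injective _ Sum.inr_injective]
    have hQ : (Finset.univ.filter fun p : ZMod n × Fin (m - 2) => PD n m (Sum.inr p)) =
        (Finset.univ.filter fun p : ZMod n × Fin (m - 2) =>
          p.2.val % 4 = 2 ∨ p.2.val % 4 = 3) ∪
        (Finset.univ.filter fun p : ZMod n × Fin (m - 2) =>
          n % 2 = 1 ∧ p.1 = 0 ∧ p.2.val = 0) := by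
      ext ⟨a, b⟩
      simp only [Finset.mem_filter, Finset.mem_univ, true_and, Finset.mem_union]
      constructor
      · rintro (h | h | h)
        · exact Or.inl (Or.inl h)
        · exact Or.inl (Or.inr h)
        · exact Or.inr h
      · rintro ((h | h) | h)
        · exact Or.inl h
        · exact Or.inr (Or.inl h)
        · exact Or.inr (Or.inr h)
    rw [hQ, Finset.card_union_of_disjoint (by
        rw [Finset.disjoint_left]
        rintro ⟨a, b⟩ h1 h2
        simp only [Finset.mem_filter, Finset.mem_univ, true_and] at h1 h2
        omega)]
    have hprod : (Finset.univ.filter fun p : ZMod n × Fin (m - 2) =>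
        p.2.val % 4 = 2 ∨ p.2.val % 4 = 3) =
        (Finset.univ : Finset (ZMod n)) ×ˢ
          (Finset.univ.filter fun j : Fin (m - 2) => j.val % 4 = 2 ∨ j.val % 4 = 3) := by
      ext ⟨a, b⟩
      simp [Finset.mem_product]
    have hfin : (Finset.univ.filter fun j : Fin (m - 2) =>
        j.val % 4 = 2 ∨ j.val % 4 = 3).card =
        ((Finset.range (m - 2)).filter fun x => x % 4 = 2 ∨ x % 4 = 3).card := by
      apply Finset.card_bij (fun (a : Fin (m - 2)) _ => a.val)
      · intro a ha
        simp only [Finset.mem_filter, Finset.mem_univ, true_and] at ha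
        simp only [Finset.mem_filter, Finset.mem_range]
        exact ⟨a.isLt, ha⟩
      · intro a _ b _ h
        exact Fin.ext h
      · intro b hb
        simp only [Finset.mem_filter, Finset.mem_range] at hb
        exact ⟨⟨b, hb.1⟩, by simp only [Finset.mem_filter, Finset.mem_univ, true_and]; exact hb.2, rfl⟩
    have hspec : (Finset.univ.filter fun p : ZMod n × Fin (m - 2) =>
        n % 2 = 1 ∧ p.1 = 0 ∧ p.2.val = 0).card = n % 2 := by
      by_cases hpar : n % 2 = 1
      · have : (Finset.univ.filter fun p : ZMod n × Fin (m - 2) =>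
            n % 2 = 1 ∧ p.1 = 0 ∧ p.2.val = 0) =
            {((0 : ZMod n), (⟨0, by omega⟩ : Fin (m - 2)))} := by
          ext ⟨a, b⟩
          simp only [Finset.mem_filter, Finset.mem_univ, true_and, Finset.mem_singleton,
            Prod.mk.injEq]
          constructor
          · rintro ⟨-, h1, h2⟩
            exact ⟨h1, Fin.ext h2⟩
          · rintro ⟨h1, h2⟩
            exact ⟨hpar, h1, by rw [h2]⟩
        rw [this, Finset.card_singleton, hpar]
      · have : (Finset.univ.filter fun p : ZMod n × Fin (m - 2) =>
            n % 2 = 1 ∧ p.1 = 0 ∧ p.2.val = 0) = ∅ := by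
          ext ⟨a, b⟩
          simp only [Finset.mem_filter, Finset.mem_univ, true_and, Finset.notMem_empty,
            iff_false]
          rintro ⟨h, -⟩
          exact hpar h
        rw [this, Finset.card_empty]
        omega
    rw [hprod, Finset.card_product, Finset.card_univ, ZMod.card, hfin, cnt_range, hspec]
    have : (m - 2) / 4 + (m - 2 + 1) / 4 = (m - 4) / 2 := by omega
    rw [this]
  rw [hcard1, hcard2, Nat.add_assoc]

lemma upper (hn : 3 ≤ n) (hm : 4 ≤ m) (h4 : m % 4 = 0) :
    ∃ D : Set (FlowerVert n m), IsPairedDominating (flowerGraph n m) D ∧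
      D.ncard = n + n * ((m - 4) / 2) + n % 2 := by
  classical
  haveI : NeZero n := ⟨by omega⟩
  refine ⟨{x | PD n m x}, ⟨?_, ?_⟩, PD_ncard hn hm h4⟩
  · intro v hv
    obtain ⟨u, hu, hadj⟩ := PD_dominating hn hm h4 v hv
    exact ⟨u, hu, hadj⟩
  · refine ⟨?_, ?_⟩
    · exact
        { verts := setOf (PD n m)
          Adj := fun a b => PD n m a ∧ PD n m b ∧
            (b = pairF n m hm h4 a ∨ a = pairF n m hm h4 b)
          adj_sub := by
            rintro a b ⟨ha, hb, rfl | rfl⟩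
            · exact pairF_adj hn hm h4 ha
            · exact (pairF_adj hn hm h4 hb).symm
          edge_vert := by
            rintro a b ⟨ha, -, -⟩
            exact ha
          symm := by
            constructor
            rintro a b ⟨ha, hb, h | h⟩
            · exact ⟨hb, ha, Or.inr h⟩
            · exact ⟨hb, ha, Or.inl h⟩ }
    · refine ⟨rfl, ?_⟩
      intro v hv
      refine ⟨pairF n m hm h4 v, ⟨hv, pairF_mem hn hm h4 hv, Or.inl rfl⟩, ?_⟩
      rintro w ⟨hv', hw, rfl | hww⟩
      · rfl
      · rw [hww]
        exact (pairF_invol hn hm h4 hw).symm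

end FlowerAux

theorem flower_pairedDomNum_mod4_0 (n m : ℕ) (hn : 3 ≤ n) (hm : 3 ≤ m) (h : m % 4 = 0) :
    (pairedDomNum (flowerGraph n m) : ℤ) = 2 * ⌈((n : ℚ) * m - 2 * n) / 4⌉ := by
  have hm4 : 4 ≤ m := by omega
  obtain ⟨K, hK⟩ : ∃ K, m = 4 * K := ⟨m / 4, by omega⟩
  have hX : 2 * (n * ((m - 4) / 2)) + 2 * n = n * (m - 2) := by
    subst hK
    have h1 : (4 * K - 4) / 2 = 2 * (K - 1) := by omega
    have h2 : 4 * K - 2 = 2 * (2 * (K - 1)) + 2 := by omega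
    rw [h1, h2]; ring
  have hY : n * ((m - 4) / 2) = 2 * (n * (K - 1)) := by
    subst hK
    have h1 : (4 * K - 4) / 2 = 2 * (K - 1) := by omega
    rw [h1]; ring
  obtain ⟨D₀, hPD₀, hcard₀⟩ := FlowerAux.upper hn hm4 h
  have hmem : (n + n * ((m - 4) / 2) + n % 2) ∈
      {c | ∃ D : Set (FlowerVert n m), IsPairedDominating (flowerGraph n m) D ∧ D.ncard = c} :=
    ⟨D₀, hPD₀, hcard₀⟩
  have hval : pairedDomNum (flowerGraph n m) = n + n * ((m - 4) / 2) + n % 2 := by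
    apply le_antisymm
    · exact Nat.sInf_le hmem
    · have hin := Nat.sInf_mem (⟨_, hmem⟩ : Set.Nonempty
        {c | ∃ D : Set (FlowerVert n m), IsPairedDominating (flowerGraph n m) D ∧ D.ncard = c})
      obtain ⟨D, hPD, hc⟩ := hin
      obtain ⟨hle, heven⟩ := FlowerAux.lower hn hm4 hPD
      obtain ⟨r, hr⟩ := heven
      show _ ≤ sInf {c | ∃ D : Set (FlowerVert n m),
        IsPairedDominating (flowerGraph n m) D ∧ D.ncard = c}
      rw [← hc]
      omega
  rw [hval]
  have hargc : ((n * (m - 2) : ℕ) : ℚ) = (n : ℚ) * m - 2 * n := by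
    push_cast [Nat.cast_sub (show 2 ≤ m by omega)]
    ring
  rw [← hargc, FlowerAux.ceil_nat_div4]
  have hfin : n + n * ((m - 4) / 2) + n % 2 = 2 * ((n * (m - 2) + 3) / 4) := by omega
  rw [hfin]
  push_cast
  ring
end

section
/- In the flower graph f_{n×4} with n even, the set D = {u_1, u_2, …, u_n} of all inner-cycle vertices, paired as (u_{2l-1}, u_{2l}) for 1 ≤ l ≤ n/2, is a paired dominating set of cardinality n. -/
theorem flower_n4_inner_paired_dominating (n : ℕ) (hn : 4 ≤ n) (he : Even n) :
    (∀ v ∉ (Set.range Sum.inl : Set (FlowerVert n 4)),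
      ∃ u ∈ (Set.range Sum.inl : Set (FlowerVert n 4)), (flowerGraph n 4).Adj u v) ∧
    (∃ M : (flowerGraph n 4).Subgraph,
      M.verts = (Set.range Sum.inl : Set (FlowerVert n 4)) ∧ M.IsMatching ∧
      ∀ x y, M.Adj x y ↔ ∃ l : ℕ, 1 ≤ l ∧ l ≤ n / 2 ∧
        ({x, y} : Set (FlowerVert n 4)) =
          {Sum.inl ((2 * l - 1 : ℕ) : ZMod n), Sum.inl ((2 * l : ℕ) : ZMod n)}) ∧
    (Set.range Sum.inl : Set (FlowerVert n 4)).ncard = n := by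
  haveI : NeZero n := ⟨by omega⟩
  obtain ⟨m, hm⟩ := he
  -- key injectivity lemma
  have hkey : ∀ a b : ℕ, 1 ≤ a → a ≤ n → 1 ≤ b → b ≤ n → ((a : ZMod n) = b) → a = b := by
    intro a b ha ha' hb hb' h
    rw [ZMod.natCast_eq_natCast_iff] at h
    have h' : a % n = b % n := h
    have e1 : a % n = if a < n then a else 0 := by
      split_ifs with h1
      · exact Nat.mod_eq_of_lt h1
      · have : a = n := by omega
        rw [this, Nat.mod_self]
    have e2 : b % n = if b < n then b else 0 := by
      split_ifs with h1
      · exact Nat.mod_eq_of_lt h1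
      · have : b = n := by omega
        rw [this, Nat.mod_self]
    rw [e1, e2] at h'
    split_ifs at h' <;> omega
  have hGadj : ∀ l : ℕ, 1 ≤ l → l ≤ n / 2 →
      (flowerGraph n 4).Adj (Sum.inl ((2 * l - 1 : ℕ) : ZMod n)) (Sum.inl ((2 * l : ℕ) : ZMod n)) := by
    intro l h1 h2
    have hb : 2 * l ≤ n := by omega
    have hne : ((2 * l - 1 : ℕ) : ZMod n) ≠ ((2 * l : ℕ) : ZMod n) := by
      intro h
      have := hkey _ _ (by omega) (by omega) (by omega) hb h
      omega
    have hsucc : ((2 * l : ℕ) : ZMod n) = ((2 * l - 1 : ℕ) : ZMod n) + 1 := by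
      have h3 : (2 * l - 1) + 1 = 2 * l := by omega
      conv_lhs => rw [← h3]
      rw [Nat.cast_add, Nat.cast_one]
    rw [flowerGraph, SimpleGraph.fromRel_adj]
    exact ⟨fun h => hne (Sum.inl.inj h), Or.inl hsucc⟩
  have huniq : ∀ (i : ZMod n) (y y' : FlowerVert n 4) (l l' : ℕ), 1 ≤ l → l ≤ n / 2 →
      1 ≤ l' → l' ≤ n / 2 →
      ({Sum.inl i, y} : Set (FlowerVert n 4)) =
        {Sum.inl ((2 * l - 1 : ℕ) : ZMod n), Sum.inl ((2 * l : ℕ) : ZMod n)} →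
      ({Sum.inl i, y'} : Set (FlowerVert n 4)) =
        {Sum.inl ((2 * l' - 1 : ℕ) : ZMod n), Sum.inl ((2 * l' : ℕ) : ZMod n)} → y = y' := by
    intro i y y' l l' h1 h2 h1' h2' hs hs'
    rcases Set.pair_eq_pair_iff.mp hs with ⟨hv, rfl⟩ | ⟨hv, rfl⟩ <;>
      rcases Set.pair_eq_pair_iff.mp hs' with ⟨hv', rfl⟩ | ⟨hv', rfl⟩ <;>
      have h := hkey _ _ (by omega) (by omega) (by omega) (by omega)
        (Sum.inl.inj (hv.symm.trans hv'))
    · have : l = l' := by omega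
      rw [this]
    · exact absurd h (by omega)
    · exact absurd h (by omega)
    · have : l = l' := by omega
      rw [this]
  have hex : ∀ i : ZMod n, ∃ (l : ℕ) (w : FlowerVert n 4), 1 ≤ l ∧ l ≤ n / 2 ∧
      ({Sum.inl i, w} : Set (FlowerVert n 4)) =
        {Sum.inl ((2 * l - 1 : ℕ) : ZMod n), Sum.inl ((2 * l : ℕ) : ZMod n)} := by
    intro i
    have hk : i.val < n := ZMod.val_lt i
    have hi : ((i.val : ℕ) : ZMod n) = i := ZMod.natCast_rightInverse i
    rcases Nat.even_or_odd i.val with hke | hko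
    · obtain ⟨c, hc⟩ := hke
      by_cases h0 : i.val = 0
      · refine ⟨n / 2, Sum.inl ((2 * (n / 2) - 1 : ℕ) : ZMod n), by omega, le_refl _, ?_⟩
        have h2 : 2 * (n / 2) = n := by omega
        have hcast : ((2 * (n / 2) : ℕ) : ZMod n) = i := by
          rw [h2, ZMod.natCast_self]
          exact ((ZMod.val_eq_zero i).mp h0).symm
        rw [hcast]
        exact Set.pair_comm _ _
      · refine ⟨i.val / 2, Sum.inl ((2 * (i.val / 2) - 1 : ℕ) : ZMod n), by omega, by omega, ?_⟩
        have h2 : 2 * (i.val / 2) = i.val := by omega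
        have hcast : ((2 * (i.val / 2) : ℕ) : ZMod n) = i := by rw [h2]; exact hi
        rw [hcast]
        exact Set.pair_comm _ _
    · obtain ⟨c, hc⟩ := hko
      refine ⟨(i.val + 1) / 2, Sum.inl ((2 * ((i.val + 1) / 2) : ℕ) : ZMod n),
        by omega, by omega, ?_⟩
      have h2 : 2 * ((i.val + 1) / 2) - 1 = i.val := by omega
      have hcast : ((2 * ((i.val + 1) / 2) - 1 : ℕ) : ZMod n) = i := by rw [h2]; exact hi
      rw [hcast]
  refine ⟨?_, ⟨⟨Set.range Sum.inl,
      fun x y => ∃ l : ℕ, 1 ≤ l ∧ l ≤ n / 2 ∧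
        ({x, y} : Set (FlowerVert n 4)) =
          {Sum.inl ((2 * l - 1 : ℕ) : ZMod n), Sum.inl ((2 * l : ℕ) : ZMod n)},
      ?_, ?_, ?_⟩, rfl, ?_, fun x y => Iff.rfl⟩, ?_⟩
  · -- domination
    rintro (i | ⟨i, j⟩) hv
    · exact absurd ⟨i, rfl⟩ hv
    · by_cases hj0 : j.val = 0
      · refine ⟨Sum.inl i, ⟨i, rfl⟩, ?_⟩
        rw [flowerGraph, SimpleGraph.fromRel_adj]
        exact ⟨by simp, Or.inl (Or.inl ⟨rfl, hj0⟩)⟩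
      · have hj1 : j.val = 1 := by have := j.isLt; omega
        refine ⟨Sum.inl (i + 1), ⟨i + 1, rfl⟩, ?_⟩
        rw [flowerGraph, SimpleGraph.fromRel_adj]
        exact ⟨by simp, Or.inl (Or.inr ⟨rfl, by omega⟩)⟩
  · -- adj_sub
    rintro x y ⟨l, h1, h2, hs⟩
    rcases Set.pair_eq_pair_iff.mp hs with ⟨rfl, rfl⟩ | ⟨rfl, rfl⟩
    · exact hGadj l h1 h2
    · exact (hGadj l h1 h2).symm
  · -- edge_vert
    rintro x y ⟨l, h1, h2, hs⟩
    rcases Set.pair_eq_pair_iff.mp hs with ⟨rfl, -⟩ | ⟨rfl, -⟩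
    · exact ⟨_, rfl⟩
    · exact ⟨_, rfl⟩
  · -- symm
    constructor
    rintro x y ⟨l, h1, h2, hs⟩
    exact ⟨l, h1, h2, by rw [Set.pair_comm]; exact hs⟩
  · -- matching
    rintro v ⟨i, rfl⟩
    obtain ⟨l, w, h1, h2, hs⟩ := hex i
    refine ⟨w, ⟨l, h1, h2, hs⟩, ?_⟩
    rintro y ⟨l', h1', h2', hs'⟩
    exact huniq i y w l' l h1' h2' h1 h2 hs' hs
  · -- cardinality
    rw [← Nat.card_coe_set_eq, Nat.card_range_of_injective Sum.inl_injective, Nat.card_zmod]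
end

section
/- If m ≡ 1 (mod 4) with m ≥ 5, then for t = ⌊m/4⌋ the set D = {v_{i,4j-3}, v_{i,4j-2} : 1 ≤ i ≤ n, 1 ≤ j ≤ t} is a paired dominating set of the flower graph f_{n×m} of cardinality n(m-1)/2. -/
/-- Counting naturals below `4*t` that are `0` or `1` mod `4`. -/
lemma count_mod4_le_one : ∀ t : ℕ,
    ((Finset.range (4 * t)).filter (fun x => x % 4 ≤ 1)).card = 2 * t := by
  intro t
  induction t with
  | zero => simp
  | succ k ih =>
    have h4 : 4 * (k + 1) = (4 * k + 3) + 1 := by ring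
    rw [h4, Finset.range_add_one, Finset.filter_insert, if_neg (by omega)]
    have h3 : 4 * k + 3 = (4 * k + 2) + 1 := by ring
    rw [h3, Finset.range_add_one, Finset.filter_insert, if_neg (by omega)]
    have h2 : 4 * k + 2 = (4 * k + 1) + 1 := by ring
    rw [h2, Finset.range_add_one, Finset.filter_insert, if_pos (by omega)]
    have h1 : 4 * k + 1 = (4 * k) + 1 := by ring
    rw [h1, Finset.range_add_one, Finset.filter_insert, if_pos (by omega)]
    rw [Finset.card_insert_of_notMem (by simp), Finset.card_insert_of_notMem (by
      simp only [Finset.mem_insert, Finset.mem_filter, Finset.mem_range]; omega), ih]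
    ring

theorem flower_mod4_1_paired_dominating (n m : ℕ) (hn : 3 ≤ n) (hm : 5 ≤ m)
    (h : m % 4 = 1) :
    IsPairedDominating (flowerGraph n m)
      {x : FlowerVert n m | ∃ (i : ZMod n) (j : Fin (m - 2)), x = Sum.inr (i, j) ∧
        ∃ j' : ℕ, 1 ≤ j' ∧ j' ≤ m / 4 ∧
          (j.val + 1 = 4 * j' - 3 ∨ j.val + 1 = 4 * j' - 2)} ∧
    {x : FlowerVert n m | ∃ (i : ZMod n) (j : Fin (m - 2)), x = Sum.inr (i, j) ∧
        ∃ j' : ℕ, 1 ≤ j' ∧ j' ≤ m / 4 ∧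
          (j.val + 1 = 4 * j' - 3 ∨ j.val + 1 = 4 * j' - 2)}.ncard
      = n * (m - 1) / 2 := by
  obtain ⟨t, ht⟩ : ∃ t, m = 4 * t + 1 := ⟨m / 4, by omega⟩
  have ht1 : 1 ≤ t := by omega
  have hm2 : m - 2 = 4 * t - 1 := by omega
  set D : Set (FlowerVert n m) :=
    {x : FlowerVert n m | ∃ (i : ZMod n) (j : Fin (m - 2)), x = Sum.inr (i, j) ∧
        ∃ j' : ℕ, 1 ≤ j' ∧ j' ≤ m / 4 ∧
          (j.val + 1 = 4 * j' - 3 ∨ j.val + 1 = 4 * j' - 2)} with hD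
  have hmem : ∀ x : FlowerVert n m,
      x ∈ D ↔ ∃ (i : ZMod n) (j : Fin (m - 2)), x = Sum.inr (i, j) ∧ j.val % 4 ≤ 1 := by
    intro x
    constructor
    · rintro ⟨i, j, rfl, j', h1, h2, h3⟩
      exact ⟨i, j, rfl, by omega⟩
    · rintro ⟨i, j, rfl, hj⟩
      have hjlt := j.isLt
      refine ⟨i, j, rfl, j.val / 4 + 1, by omega, by omega, by omega⟩
  -- predicate for the matching
  set P : FlowerVert n m → FlowerVert n m → Prop := fun a b =>
    ∃ (i : ZMod n) (j j' : Fin (m - 2)), a = Sum.inr (i, j) ∧ b = Sum.inr (i, j') ∧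
      j'.val = j.val + 1 ∧ j.val % 4 = 0 with hP
  have hPadj : ∀ a b, P a b → (flowerGraph n m).Adj a b := by
    rintro a b ⟨i, j, j', rfl, rfl, hj', hj⟩
    rw [flowerGraph, SimpleGraph.fromRel_adj]
    refine ⟨?_, Or.inl ⟨rfl, hj'⟩⟩
    intro hc
    have : j = j' := by
      have := (Sum.inr.injEq _ _).mp hc
      exact (Prod.mk.injEq _ _ _ _ |>.mp this).2
    omega
  have hPvert1 : ∀ a b, P a b → a ∈ D := by
    rintro a b ⟨i, j, j', rfl, rfl, hj', hj⟩
    exact (hmem _).2 ⟨i, j, rfl, by omega⟩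
  have hPvert2 : ∀ a b, P a b → b ∈ D := by
    rintro a b ⟨i, j, j', rfl, rfl, hj', hj⟩
    exact (hmem _).2 ⟨i, j', rfl, by omega⟩
  refine ⟨⟨?_, ?_⟩, ?_⟩
  · -- domination
    intro v hv
    match v with
    | Sum.inl i =>
      have h0 : (0 : ℕ) < m - 2 := by omega
      refine ⟨Sum.inr (i, ⟨0, h0⟩), (hmem _).2 ⟨i, ⟨0, h0⟩, rfl, by simp⟩, ?_⟩
      rw [flowerGraph, SimpleGraph.fromRel_adj]
      exact ⟨by simp, Or.inr (Or.inl ⟨rfl, rfl⟩)⟩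
    | Sum.inr (i, j) =>
      have hj2 : 2 ≤ j.val % 4 := by
        by_contra hc
        exact hv ((hmem _).2 ⟨i, j, rfl, by omega⟩)
      have hjlt := j.isLt
      rcases Nat.lt_or_ge (j.val % 4) 3 with hc | hc
      · -- j % 4 = 2, use predecessor
        have hlt : j.val - 1 < m - 2 := by omega
        refine ⟨Sum.inr (i, ⟨j.val - 1, hlt⟩), (hmem _).2 ⟨i, _, rfl, by simp; omega⟩, ?_⟩
        rw [flowerGraph, SimpleGraph.fromRel_adj]
        constructor
        · intro hceq
          have : (⟨j.val - 1, hlt⟩ : Fin (m - 2)) = j :=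
            (Prod.mk.injEq _ _ _ _ |>.mp ((Sum.inr.injEq _ _).mp hceq)).2
          have := Fin.val_eq_val _ _ |>.2 this
          simp at this; omega
        · exact Or.inl ⟨rfl, by simp; omega⟩
      · -- j % 4 = 3, use successor
        have hlt : j.val + 1 < m - 2 := by omega
        refine ⟨Sum.inr (i, ⟨j.val + 1, hlt⟩), (hmem _).2 ⟨i, _, rfl, by simp; omega⟩, ?_⟩
        rw [flowerGraph, SimpleGraph.fromRel_adj]
        constructor
        · intro hceq
          have : (⟨j.val + 1, hlt⟩ : Fin (m - 2)) = j :=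
            (Prod.mk.injEq _ _ _ _ |>.mp ((Sum.inr.injEq _ _).mp hceq)).2
          have := Fin.val_eq_val _ _ |>.2 this
          simp at this
        · exact Or.inr ⟨rfl, rfl⟩
  · -- matching
    refine ⟨⟨D, fun a b => P a b ∨ P b a, ?_, ?_, ⟨fun _ _ hab => Or.symm hab⟩⟩, rfl, ?_⟩
    · rintro a b (hab | hba)
      · exact hPadj _ _ hab
      · exact ((flowerGraph n m).adj_symm (hPadj _ _ hba))
    · rintro a b (hab | hba)
      · exact hPvert1 _ _ hab
      · exact hPvert2 _ _ hba
    · intro v hv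
      obtain ⟨i, j, rfl, hj⟩ := (hmem _).1 hv
      have hjlt := j.isLt
      rcases Nat.lt_or_ge (j.val % 4) 1 with hc | hc
      · -- j % 4 = 0, partner is j+1
        have hj0 : j.val % 4 = 0 := by omega
        have hlt : j.val + 1 < m - 2 := by omega
        refine ⟨Sum.inr (i, ⟨j.val + 1, hlt⟩), Or.inl ⟨i, j, ⟨j.val + 1, hlt⟩, rfl, rfl, rfl, hj0⟩, ?_⟩
        rintro w (⟨i', j1, j2, heq, rfl, hj2, hj1⟩ | ⟨i', j1, j2, rfl, heq, hj2, hj1⟩)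
        · obtain ⟨hi, hjj⟩ := Prod.mk.injEq _ _ _ _ |>.mp ((Sum.inr.injEq _ _).mp heq)
          subst hi
          have hv1 : j1.val = j.val := by rw [hjj]
          have hfin : j2 = (⟨j.val + 1, hlt⟩ : Fin (m - 2)) := Fin.ext (by simp; omega)
          rw [hfin]
        · obtain ⟨hi, hjj⟩ := Prod.mk.injEq _ _ _ _ |>.mp ((Sum.inr.injEq _ _).mp heq)
          have : j2.val = j.val := by rw [hjj]
          omega
      · -- j % 4 = 1, partner is j-1
        have hj1' : j.val % 4 = 1 := by omega
        have hlt : j.val - 1 < m - 2 := by omega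
        refine ⟨Sum.inr (i, ⟨j.val - 1, hlt⟩),
          Or.inr ⟨i, ⟨j.val - 1, hlt⟩, j, rfl, rfl, by simp; omega, by simp; omega⟩, ?_⟩
        rintro w (⟨i', j1, j2, heq, rfl, hj2, hj1⟩ | ⟨i', j1, j2, rfl, heq, hj2, hj1⟩)
        · obtain ⟨hi, hjj⟩ := Prod.mk.injEq _ _ _ _ |>.mp ((Sum.inr.injEq _ _).mp heq)
          have : j1.val = j.val := by rw [hjj]
          omega
        · obtain ⟨hi, hjj⟩ := Prod.mk.injEq _ _ _ _ |>.mp ((Sum.inr.injEq _ _).mp heq)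
          subst hi
          have hv2 : j2.val = j.val := by rw [hjj]
          have hfin : j1 = (⟨j.val - 1, hlt⟩ : Fin (m - 2)) := Fin.ext (by simp; omega)
          rw [hfin]
  · -- cardinality
    classical
    have hne : NeZero n := ⟨by omega⟩
    set T : Finset (Fin (m - 2)) := Finset.univ.filter (fun j => j.val % 4 ≤ 1) with hT
    have hDF : D = ↑((Finset.univ ×ˢ T).image (Sum.inr : ZMod n × Fin (m - 2) → FlowerVert n m)) := by
      ext x
      rw [hmem]
      simp only [Finset.coe_image, Set.mem_image, Finset.mem_coe, Finset.mem_product,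
        Finset.mem_filter, Finset.mem_univ, true_and, hT]
      constructor
      · rintro ⟨i, j, rfl, hj⟩
        exact ⟨(i, j), hj, rfl⟩
      · rintro ⟨⟨i, j⟩, hj, rfl⟩
        exact ⟨i, j, rfl, hj⟩
    rw [hDF, Set.ncard_coe_finset,
      Finset.card_image_of_injective _ Sum.inr_injective, Finset.card_product]
    have hcardT : T.card = 2 * t := by
      have hsum : T.card = ((Finset.range (m - 2)).filter (fun x => x % 4 ≤ 1)).card := by
        rw [hT, Finset.card_filter, Finset.card_filter]
        exact Fin.sum_univ_eq_sum_range (fun k => if k % 4 ≤ 1 then 1 else 0) (m - 2)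
      rw [hsum]
      have h4t : 4 * t = (m - 2) + 1 := by omega
      have := count_mod4_le_one t
      rw [h4t, Finset.range_add_one, Finset.filter_insert, if_neg (by omega)] at this
      exact this
    rw [hcardT, Finset.card_univ, ZMod.card n]
    have hm1 : m - 1 = 4 * t := by omega
    have hmul : n * (m - 1) = (n * (2 * t)) * 2 := by rw [hm1]; ring
    rw [hmul, Nat.mul_div_cancel _ (by norm_num)]
end
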